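/- arXiv:1801.05577 — 2 statements merged into one kernel-verified Lean document; each statement's English description precedes it below -/
import Mathlib

section
/- Let A be an n×n real matrix, let x ∈ ker A be nonzero, and let i ≠ j be indices such that ker A = F_{i,j}(A)^⊥. Let (i,j,k,ℓ) be a quadruple in which a simple switching can be performed on A with x_k ≠ x_ℓ, and let Ā be the matrix obtained from A by this switching. Then rank Ā = rank A + 1. -/
open Matrix

/-- `𝒜_{n,d}`: 0/1 matrices with exactly `d` ones in every row and column. -/
def IsRegAdj (n d : ℕ) (A : Matrix (Fin n) (Fin n) ℝ) : Prop :=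
  (∀ i j, A i j = 0 ∨ A i j = 1) ∧
  (∀ i, {j : Fin n | A i j = 1}.ncard = d) ∧
  (∀ j, {i : Fin n | A i j = 1}.ncard = d)

/-- A simple switching can be performed in `(i, j, k, l)`. -/
def CanSwitch {n : ℕ} (A : Matrix (Fin n) (Fin n) ℝ) (i j k l : Fin n) : Prop :=
  A i k = 1 ∧ A j l = 1 ∧ A i l = 0 ∧ A j k = 0

/-- The matrix obtained from `A` by the simple switching in `(i, j, k, l)`. -/
def switch {n : ℕ} (A : Matrix (Fin n) (Fin n) ℝ) (i j k l : Fin n) :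
    Matrix (Fin n) (Fin n) ℝ :=
  Matrix.of fun s t =>
    if (s = i ∧ t = k) ∨ (s = j ∧ t = l) then 0
    else if (s = i ∧ t = l) ∨ (s = j ∧ t = k) then 1
    else A s t

/-- `F_{i,j}(A)`: the span of the rows of `A` other than the `i`-th and the `j`-th,
together with `R_i + R_j`. -/
def rowSpanF {n : ℕ} (A : Matrix (Fin n) (Fin n) ℝ) (i j : Fin n) :
    Submodule ℝ (Fin n → ℝ) :=
  Submodule.span ℝ (insert (A i + A j) {r : Fin n → ℝ | ∃ s, s ≠ i ∧ s ≠ j ∧ r = A s})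

/-- Orthogonal complement w.r.t. the standard inner product on `ℝⁿ`. -/
def perp {n : ℕ} (F : Submodule ℝ (Fin n → ℝ)) : Submodule ℝ (Fin n → ℝ) where
  carrier := {x | ∀ v ∈ F, v ⬝ᵥ x = 0}
  zero_mem' := by intro v hv; simp
  add_mem' := by intro a b ha hb v hv; simp [dotProduct_add, ha v hv, hb v hv]
  smul_mem' := by intro c x hx v hv; simp [dotProduct_smul, hx v hv]

/-- `A` is `β`-delocalized: no level set of a nonzero null vector (of `A` or `Aᵀ`)
has more than `β` coordinates. -/
def Delocalized {n : ℕ} (β : ℝ) (A : Matrix (Fin n) (Fin n) ℝ) : Prop :=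
  ∀ x : Fin n → ℝ, x ≠ 0 →
    (x ∈ LinearMap.ker A.mulVecLin ∨ x ∈ LinearMap.ker Aᵀ.mulVecLin) →
    ∀ lam : ℝ, ({i : Fin n | x i = lam}.ncard : ℝ) ≤ β

/-!
Since `ker A = F^⊥` and `F^⊥⊥ = F` in finite dimension, the row space of `A` is
`F = F_{i,j}(A)`. The switching keeps the rows other than `i, j` and the sum `R_i + R_j`, so
`F_{i,j}(Ā) = F` and the row space of `Ā` is `F + ℝ R̄_i`. Finally `R̄_i = R_i - e_k + e_l` pairs
with `x` to `x_l - x_k ≠ 0` while `x ⊥ F`, so `R̄_i ∉ F` and the rank goes up by exactly one.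
-/

open Submodule

section DotProduct

variable {R m : Type*} [Fintype m]

lemma dotProductBilin_isRefl [CommRing R] :
    LinearMap.BilinForm.IsRefl (dotProductBilin R R : LinearMap.BilinForm R (m → R)) :=
  fun v w h => by simpa [dotProduct_comm] using h

lemma dotProductBilin_nondegenerate [Field R] [LinearOrder R] [IsStrictOrderedRing R] :
    (dotProductBilin R R : LinearMap.BilinForm R (m → R)).Nondegenerate :=
  ⟨fun v hv => dotProduct_self_eq_zero.1 (hv v), fun v hv => dotProduct_self_eq_zero.1 (hv v)⟩

end DotProduct

section Perp

variable {n : ℕ}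

lemma perp_eq_orthogonal (F : Submodule ℝ (Fin n → ℝ)) :
    perp F = LinearMap.BilinForm.orthogonal (dotProductBilin ℝ ℝ) F := by
  ext w
  simp [perp]

lemma perp_perp (F : Submodule ℝ (Fin n → ℝ)) : perp (perp F) = F := by
  simp only [perp_eq_orthogonal]
  exact LinearMap.BilinForm.orthogonal_orthogonal dotProductBilin_nondegenerate
    dotProductBilin_isRefl F

lemma mem_perp_span_iff {S : Set (Fin n → ℝ)} {w : Fin n → ℝ} :
    w ∈ perp (span ℝ S) ↔ ∀ v ∈ S, v ⬝ᵥ w = 0 := by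
  refine ⟨fun hw v hv => hw v (subset_span hv), fun hw v hv => ?_⟩
  induction hv using span_induction with
  | mem v hv => exact hw v hv
  | zero => exact zero_dotProduct w
  | add a b _ _ ha hb => rw [add_dotProduct, ha, hb, add_zero]
  | smul c a _ ha => rw [smul_dotProduct, ha, smul_zero]

lemma ker_mulVecLin_eq_perp_span_row {m : Type*} (M : Matrix m (Fin n) ℝ) :
    LinearMap.ker M.mulVecLin = perp (span ℝ (Set.range M.row)) := by
  ext w
  rw [mem_perp_span_iff, Set.forall_mem_range, LinearMap.mem_ker, mulVecLin_apply, funext_iff]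
  rfl

lemma span_row_eq_of_ker_eq_perp {m : Type*} {M : Matrix m (Fin n) ℝ}
    {F : Submodule ℝ (Fin n → ℝ)} (h : LinearMap.ker M.mulVecLin = perp F) :
    span ℝ (Set.range M.row) = F := by
  rw [← perp_perp (span ℝ _), ← ker_mulVecLin_eq_perp_span_row, h, perp_perp]

end Perp

section RowSpanF

variable {n : ℕ}

lemma span_row_eq_rowSpanF_sup (M : Matrix (Fin n) (Fin n) ℝ) (i j : Fin n) :
    span ℝ (Set.range M.row) = rowSpanF M i j ⊔ span ℝ {M i} := by
  have hrow : ∀ s, M s ∈ span ℝ (Set.range M.row) := fun s => subset_span ⟨s, rfl⟩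
  apply le_antisymm
  · rw [span_le]
    rintro _ ⟨s, rfl⟩
    have hsum : M i + M j ∈ rowSpanF M i j := subset_span (Set.mem_insert _ _)
    have hi : M i ∈ rowSpanF M i j ⊔ span ℝ {M i} := mem_sup_right (mem_span_singleton_self _)
    by_cases hsi : s = i
    · exact hsi ▸ hi
    by_cases hsj : s = j
    · have : M j = (M i + M j) - M i := by abel
      rw [row, hsj, this]
      exact sub_mem (mem_sup_left hsum) hi
    · exact mem_sup_left (subset_span (Set.mem_insert_of_mem _ ⟨s, hsi, hsj, rfl⟩))
  · refine sup_le ?_ ((span_singleton_le_iff_mem _ _).2 (hrow i))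
    rw [rowSpanF, span_le]
    rintro _ (rfl | ⟨s, -, -, rfl⟩)
    · exact add_mem (hrow i) (hrow j)
    · exact hrow s

lemma rowSpanF_congr {M N : Matrix (Fin n) (Fin n) ℝ} {i j : Fin n}
    (hrows : ∀ s, s ≠ i → s ≠ j → M s = N s) (hsum : M i + M j = N i + N j) :
    rowSpanF M i j = rowSpanF N i j := by
  unfold rowSpanF
  rw [hsum]
  congr 2
  ext r
  exact exists_congr fun s => and_congr_right fun hsi => and_congr_right fun hsj => by
    rw [hrows s hsi hsj]

end RowSpanF

section Switch

variable {n : ℕ} {A : Matrix (Fin n) (Fin n) ℝ} {i j k l : Fin n}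

lemma CanSwitch.row_ne (h : CanSwitch A i j k l) : i ≠ j := by
  rintro rfl
  simpa [h.2.2.2] using h.1

lemma CanSwitch.col_ne (h : CanSwitch A i j k l) : k ≠ l := by
  rintro rfl
  simpa [h.2.2.1] using h.1

lemma switch_row_of_ne {s : Fin n} (hsi : s ≠ i) (hsj : s ≠ j) : switch A i j k l s = A s := by
  ext t
  simp [switch, hsi, hsj]

lemma CanSwitch.switch_row_left (h : CanSwitch A i j k l) :
    switch A i j k l i = A i - Pi.single k 1 + Pi.single l 1 := by
  have hij := h.row_ne
  have hkl := h.col_ne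
  obtain ⟨hik, -, hil, -⟩ := h
  ext t
  rcases eq_or_ne t k with rfl | htk
  · simp [switch, hik, hkl.symm]
  rcases eq_or_ne t l with rfl | htl
  · simp [switch, hil, hij, htk]
  · simp [switch, htk, htl]

lemma CanSwitch.switch_row_right (h : CanSwitch A i j k l) :
    switch A i j k l j = A j + Pi.single k 1 - Pi.single l 1 := by
  have hij := h.row_ne
  have hkl := h.col_ne
  obtain ⟨-, hjl, -, hjk⟩ := h
  ext t
  rcases eq_or_ne t k with rfl | htk
  · simp [switch, hjk, hij.symm, hkl]
  rcases eq_or_ne t l with rfl | htl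
  · simp [switch, hjl, hij.symm, hkl.symm]
  · simp [switch, htk, htl]

lemma CanSwitch.rowSpanF_switch (h : CanSwitch A i j k l) :
    rowSpanF (switch A i j k l) i j = rowSpanF A i j := by
  refine rowSpanF_congr (fun s hsi hsj => switch_row_of_ne hsi hsj) ?_
  rw [h.switch_row_left, h.switch_row_right]
  abel

lemma CanSwitch.switch_row_left_dotProduct (h : CanSwitch A i j k l) (x : Fin n → ℝ) :
    switch A i j k l i ⬝ᵥ x = A i ⬝ᵥ x + (x l - x k) := by
  rw [h.switch_row_left, add_dotProduct, sub_dotProduct, single_dotProduct, single_dotProduct]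
  ring

end Switch

theorem stmt_12_general (n : ℕ) (A : Matrix (Fin n) (Fin n) ℝ)
    (x : Fin n → ℝ) (hx : x ∈ LinearMap.ker A.mulVecLin)
    (i j k l : Fin n)
    (hker : LinearMap.ker A.mulVecLin = perp (rowSpanF A i j))
    (h : CanSwitch A i j k l) (hkl : x k ≠ x l) :
    (switch A i j k l).rank = A.rank + 1 := by
  have hAx : A i ⬝ᵥ x = 0 := congrFun hx i
  have hnotin : switch A i j k l i ∉ rowSpanF A i j := fun hmem => by
    have hperp : switch A i j k l i ⬝ᵥ x = 0 := (hker ▸ hx : x ∈ perp _) _ hmem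
    rw [h.switch_row_left_dotProduct, hAx, zero_add, sub_eq_zero] at hperp
    exact hkl hperp.symm
  rw [rank_eq_finrank_span_row, rank_eq_finrank_span_row, span_row_eq_rowSpanF_sup _ i j,
    h.rowSpanF_switch, finrank_sup_span_singleton hnotin, span_row_eq_of_ker_eq_perp hker]

/-- a switching on rows `i, j` with `(i,j) ∈ K_A` which is not `x`-bad
increases the rank by one. -/
theorem stmt_12 (n : ℕ) (A : Matrix (Fin n) (Fin n) ℝ)
    (x : Fin n → ℝ) (hx : x ∈ LinearMap.ker A.mulVecLin) (hx0 : x ≠ 0)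
    (i j k l : Fin n) (hij : i ≠ j)
    (hker : LinearMap.ker A.mulVecLin = perp (rowSpanF A i j))
    (h : CanSwitch A i j k l) (hkl : x k ≠ x l) :
    (switch A i j k l).rank = A.rank + 1 :=
  stmt_12_general n A x hx i j k l hker h hkl
end

section
/- Let A be an n×n real matrix with rank A = n−1, let i ≠ j be indices, and let x ∈ ker Aᵀ satisfy x_i = −1 and x_j ≠ −1. Then R_i + R_j ∉ span{R_s : s ≠ i,j} and ker A = F_{i,j}(A)^⊥. -/
/-
Reading the relation `∑ₛ xₛ Rₛ = 0` as
`(x_j - x_i) R_j = -x_i (R_i + R_j) - (terms in the other rows)` with `x_j ≠ x_i = -1`, any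
subspace containing the other rows and `R_i + R_j` also contains `R_j`, hence `R_i`, hence the
whole row space. Consequently `F_{i,j}(A)` is the row space of `A`, whose orthogonal complement is
`ker A`; and if `R_i + R_j` lay in the span of the `n - 2` other rows, the rank of `A` would be at
most `n - 2`.
-/

open Matrix

section LinearRelation

variable {K M ι : Type*} [Field K] [AddCommGroup M] [Module K M] [Fintype ι]
  {v : ι → M} {c : ι → K} {i j : ι}

theorem range_subset_of_sum_smul_eq_zero_of_add_mem (hrel : ∑ s, c s • v s = 0) (hij : i ≠ j)
    (hc : c i ≠ c j) {W : Submodule K M}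
    (hW : {r : M | ∃ s, s ≠ i ∧ s ≠ j ∧ r = v s} ⊆ W) (hadd : v i + v j ∈ W) :
    Set.range v ⊆ W := by
  classical
  set rest := ∑ s ∈ ({i, j} : Finset ι)ᶜ, c s • v s
  have hrest : rest ∈ W :=
    W.sum_mem fun s hs => W.smul_mem _ <| hW ⟨s, by simpa [not_or] using hs⟩
  have hsplit : c i • v i + c j • v j + rest = 0 := by
    rw [← Finset.sum_pair (f := fun s => c s • v s) hij, Finset.sum_add_sum_compl]
    exact hrel
  have hj : v j ∈ W := by
    have hcoef : (c j - c i) • v j = -(c i • (v i + v j)) - rest := by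
      linear_combination (norm := module) hsplit
    have hsmul : (c j - c i) • v j ∈ W :=
      hcoef ▸ W.sub_mem (W.neg_mem (W.smul_mem _ hadd)) hrest
    simpa [sub_ne_zero.mpr hc.symm] using W.smul_mem (c j - c i)⁻¹ hsmul
  have hi : v i ∈ W := by simpa using W.sub_mem hadd hj
  rintro _ ⟨s, rfl⟩
  by_cases hsi : s = i
  · exact hsi ▸ hi
  by_cases hsj : s = j
  · exact hsj ▸ hj
  exact hW ⟨s, hsi, hsj, rfl⟩

theorem span_insert_add_eq_span_range (hrel : ∑ s, c s • v s = 0) (hij : i ≠ j)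
    (hc : c i ≠ c j) :
    Submodule.span K (insert (v i + v j) {r : M | ∃ s, s ≠ i ∧ s ≠ j ∧ r = v s}) =
      Submodule.span K (Set.range v) := by
  apply le_antisymm
  · refine Submodule.span_le.mpr (Set.insert_subset ?_ ?_)
    · exact add_mem (Submodule.subset_span ⟨i, rfl⟩) (Submodule.subset_span ⟨j, rfl⟩)
    · rintro _ ⟨s, -, -, rfl⟩
      exact Submodule.subset_span ⟨s, rfl⟩
  · refine Submodule.span_le.mpr (range_subset_of_sum_smul_eq_zero_of_add_mem hrel hij hc ?_ ?_)
    · exact (Set.subset_insert _ _).trans Submodule.subset_span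
    · exact Submodule.subset_span (Set.mem_insert _ _)

theorem finrank_span_ne_ne_le (v : ι → M) (hij : i ≠ j) :
    Module.finrank K (Submodule.span K {r : M | ∃ s, s ≠ i ∧ s ≠ j ∧ r = v s}) ≤
      Fintype.card ι - 2 := by
  classical
  have hset : {r : M | ∃ s, s ≠ i ∧ s ≠ j ∧ r = v s} = ↑(({i, j} : Finset ι)ᶜ.image v) := by
    ext r
    simp only [Finset.coe_image, Finset.coe_compl, Set.mem_image, Set.mem_compl_iff, Finset.mem_coe,
      Finset.mem_insert, Finset.mem_singleton, not_or]
    grind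
  rw [hset]
  calc _ ≤ (({i, j} : Finset ι)ᶜ.image v).card := finrank_span_finset_le_card _
    _ ≤ ({i, j} : Finset ι)ᶜ.card := Finset.card_image_le
    _ = Fintype.card ι - 2 := by rw [Finset.card_compl, Finset.card_pair hij]

theorem add_notMem_span_of_sum_smul_eq_zero
    (hrk : Fintype.card ι - 1 ≤ Module.finrank K (Submodule.span K (Set.range v)))
    (hrel : ∑ s, c s • v s = 0) (hij : i ≠ j) (hc : c i ≠ c j) :
    v i + v j ∉ Submodule.span K {r : M | ∃ s, s ≠ i ∧ s ≠ j ∧ r = v s} := by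
  intro hadd
  have hspan : Submodule.span K {r : M | ∃ s, s ≠ i ∧ s ≠ j ∧ r = v s} =
      Submodule.span K (Set.range v) := by
    refine le_antisymm (Submodule.span_mono ?_) (Submodule.span_le.mpr ?_)
    · rintro _ ⟨s, -, -, rfl⟩
      exact ⟨s, rfl⟩
    · exact range_subset_of_sum_smul_eq_zero_of_add_mem hrel hij hc Submodule.subset_span hadd
  have htwo : 1 < Fintype.card ι := Fintype.one_lt_card_iff_nontrivial.mpr ⟨i, j, hij⟩
  have := finrank_span_ne_ne_le (K := K) v hij
  rw [hspan] at this
  omega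

end LinearRelation

theorem Matrix.ker_mulVecLin_eq_perp_span_range {m n : ℕ} (A : Matrix (Fin m) (Fin n) ℝ) :
    LinearMap.ker A.mulVecLin = perp (Submodule.span ℝ (Set.range A)) := by
  ext y
  simp only [LinearMap.mem_ker, Matrix.mulVecLin_apply]
  refine ⟨fun hy w hw => ?_, fun hy => funext fun s => hy (A s) (Submodule.subset_span ⟨s, rfl⟩)⟩
  induction hw using Submodule.span_induction with
  | mem w hw =>
    obtain ⟨s, rfl⟩ := hw
    exact congrFun hy s
  | zero => exact zero_dotProduct y
  | add a b _ _ ha hb => rw [add_dotProduct, ha, hb, add_zero]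
  | smul c a _ ha => rw [smul_dotProduct, ha, smul_zero]

/-- for a matrix of corank one, if `x ∈ ker Aᵀ` with `x_i = -1` and
`x_j ≠ -1`, then `R_i + R_j` is outside the span of the remaining rows and
`ker A = F_{i,j}(A)^⊥`. -/
theorem stmt_17 (n : ℕ) (A : Matrix (Fin n) (Fin n) ℝ) (hrk : A.rank = n - 1)
    (i j : Fin n) (hij : i ≠ j)
    (x : Fin n → ℝ) (hx : x ∈ LinearMap.ker Aᵀ.mulVecLin) (hxi : x i = -1)
    (hxj : x j ≠ -1) :
    A i + A j ∉ Submodule.span ℝ {r : Fin n → ℝ | ∃ s, s ≠ i ∧ s ≠ j ∧ r = A s} ∧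
    LinearMap.ker A.mulVecLin = perp (rowSpanF A i j) := by
  have hrel : ∑ s, x s • A s = 0 := by
    rw [← vecMul_eq_sum, ← mulVec_transpose]
    exact hx
  have hc : x i ≠ x j := hxi ▸ hxj.symm
  refine ⟨add_notMem_span_of_sum_smul_eq_zero ?_ hrel hij hc, ?_⟩
  · rw [Fintype.card_fin, ← hrk, rank_eq_finrank_span_row]
    rfl
  · rw [rowSpanF, span_insert_add_eq_span_range hrel hij hc, ker_mulVecLin_eq_perp_span_range]
end
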